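/- Let N ≥ 3 and let G be the cycle graph on vertex set {0,…,N−1}, in which vertex m is adjacent to vertices m±1 (mod N), with Laplacian matrix L. Let M be a pseudoinverse of L (M symmetric, M·𝟙 = 0, and L·M = I − (1/N)·J). Then for all vertices j, k with k ≤ j and l = j − k, the squared biharmonic distance satisfies d_B²(j,k) = l⁴/(12N) − l³/6 + l²N/12 − l²/(6N) + l/6. -/

import Mathlib

/-!
Since `M` is symmetric, `d_B²(j,k) = ‖M (e_j - e_k)‖²`. On a connected graph `L y = e_j - e_k`
has exactly one solution with `∑ y = 0`, and `M (e_j - e_k)` is that solution. On the cycle it is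
the difference of two translates of the Green's function `g(t) = t (N - t) / (2N)`, `0 ≤ t < N`,
whose second difference is `-1/N` away from the origin. This dipole is affine on the two arcs
between `k` and `j`, so `‖y‖²` is a sum of squares of arithmetic progressions, which comes out as
`l (N - l) (l (N - l) + 2) / (12 N)`.
-/

open Matrix Finset

/-- Squared biharmonic distance between vertices `j` and `k`, in terms of a
pseudoinverse `M` of the graph Laplacian. -/
noncomputable def biharmSq {N : ℕ} (M : Matrix (Fin N) (Fin N) ℝ) (j k : Fin N) : ℝ :=
  (M * M) j j + (M * M) k k - 2 * (M * M) j k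

namespace SimpleGraph

variable {V : Type*} [Fintype V] [DecidableEq V] {G : SimpleGraph V} [DecidableRel G.Adj]

theorem Connected.eq_zero_of_lapMatrix_mulVec_eq_zero (hG : G.Connected) {z : V → ℝ}
    (hz : G.lapMatrix ℝ *ᵥ z = 0) (hsum : ∑ i, z i = 0) : z = 0 := by
  have hconst := (lapMatrix_mulVec_eq_zero_iff_forall_reachable G).1 hz
  have : Nonempty V := hG.nonempty
  have hcard : (Fintype.card V : ℝ) ≠ 0 := by positivity
  funext i
  have : (Fintype.card V : ℝ) * z i = 0 := by
    rw [← hsum, ← card_univ, ← nsmul_eq_mul, ← sum_const]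
    exact sum_congr rfl fun j _ => hconst i j (hG i j)
  simpa [hcard] using this

theorem Connected.mulVec_eq_of_lapMatrix_mul_eq (hG : G.Connected) {M : Matrix V V ℝ}
    (hMsymm : M.IsSymm) (hM1 : M *ᵥ (fun _ => 1) = 0)
    (hLM : G.lapMatrix ℝ * M = 1 - (Fintype.card V : ℝ)⁻¹ • of (fun _ _ => (1 : ℝ)))
    {w y : V → ℝ} (hw : ∑ i, w i = 0) (hy : G.lapMatrix ℝ *ᵥ y = w) (hysum : ∑ i, y i = 0) :
    M *ᵥ w = y := by
  have hJw : of (fun (_ _ : V) => (1 : ℝ)) *ᵥ w = 0 := by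
    funext i
    simp [mulVec, dotProduct, hw]
  have hMw : ∑ i, (M *ᵥ w) i = 0 := by
    have : (fun _ => (1 : ℝ)) ⬝ᵥ (M *ᵥ w) = 0 := by
      rw [dotProduct_mulVec, ← mulVec_transpose, hMsymm.eq, hM1, zero_dotProduct]
    simpa [dotProduct] using this
  refine sub_eq_zero.1 (hG.eq_zero_of_lapMatrix_mulVec_eq_zero ?_ ?_)
  · rw [mulVec_sub, mulVec_mulVec, hLM, sub_mulVec, one_mulVec, smul_mulVec, hJw, hy]
    simp
  · simp [sum_sub_distrib, hMw, hysum]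

end SimpleGraph

open SimpleGraph

theorem biharmSq_eq_sum_sq {N : ℕ} {M : Matrix (Fin N) (Fin N) ℝ} (hM : M.IsSymm) (j k : Fin N) :
    biharmSq M j k = ∑ i, (M *ᵥ (Pi.single j 1 - Pi.single k 1)) i ^ 2 := by
  simp only [biharmSq, mul_apply, mulVec_sub, mulVec_single_one, Pi.sub_apply, col_apply,
    ← hM.apply j, ← hM.apply k, mul_sum, ← sum_add_distrib, ← sum_sub_distrib]
  exact sum_congr rfl fun i _ => by ring

theorem cycleGraph_adj_iff_val {N : ℕ} (hN : 2 ≤ N) {a b : Fin N} :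
    (cycleGraph N).Adj a b ↔ (a.val + 1) % N = b.val ∨ (b.val + 1) % N = a.val := by
  obtain ⟨n, rfl⟩ := Nat.exists_eq_add_of_le' hN
  rw [cycleGraph_adj, sub_eq_iff_eq_add, sub_eq_iff_eq_add, Fin.ext_iff, Fin.ext_iff,
    Fin.val_add, Fin.val_add, Fin.val_one, add_comm 1, add_comm 1, eq_comm, @eq_comm _ b.val,
    or_comm]

noncomputable def cycleGreen (N : ℕ) (x : ℝ) : ℝ := x * (N - x) / (2 * N)

noncomputable def cycleDipole (N : ℕ) (j k : Fin N) : Fin N → ℝ :=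
  fun i => cycleGreen N (i - k).val - cycleGreen N (i - j).val

section Cycle

variable {N : ℕ} [NeZero N]

theorem cycleGraph_connected_of_neZero : (cycleGraph N).Connected := by
  obtain ⟨n, rfl⟩ := Nat.exists_eq_add_one_of_ne_zero (NeZero.ne N)
  exact cycleGraph_connected

theorem cycleGraph_lapMatrix_mulVec_apply (hN : 3 ≤ N) (x : Fin N → ℝ) (v : Fin N) :
    ((cycleGraph N).lapMatrix ℝ *ᵥ x) v = 2 * x v - x (v - 1) - x (v + 1) := by
  obtain ⟨n, rfl⟩ := Nat.exists_eq_add_of_le' hN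
  have hne : v - 1 ≠ v + 1 := by
    rw [← card_pair_eq_two_iff, ← cycleGraph_degree_two_le, cycleGraph_degree_three_le]
  rw [lapMatrix_mulVec_apply, cycleGraph_degree_three_le, cycleGraph_neighborFinset,
    sum_pair hne, Nat.cast_two, sub_sub]

theorem cycleGreen_val_add_one (t : Fin N) :
    cycleGreen N (t + 1 : Fin N).val = cycleGreen N (t.val + 1) := by
  obtain ⟨n, rfl⟩ := Nat.exists_eq_add_one_of_ne_zero (NeZero.ne N)
  rw [Fin.val_add_one]
  split_ifs with h
  · simp [h, cycleGreen]
  · push_cast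
    rfl

theorem cycleGreen_val_sub_one (t : Fin N) :
    cycleGreen N (t - 1 : Fin N).val = cycleGreen N (t.val - 1) + if t = 0 then 1 else 0 := by
  obtain ⟨n, rfl⟩ := Nat.exists_eq_add_one_of_ne_zero (NeZero.ne N)
  rw [Fin.coe_sub_one]
  split_ifs with h
  · simp only [h, Fin.val_zero, cycleGreen]
    field_simp
    push_cast
    ring
  · rw [Nat.cast_pred (Nat.pos_of_ne_zero (Fin.val_ne_zero_iff.2 h)), add_zero]

theorem cycleGreen_second_difference (t : Fin N) :
    2 * cycleGreen N t.val - cycleGreen N (t - 1 : Fin N).val - cycleGreen N (t + 1 : Fin N).val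
      = (N : ℝ)⁻¹ - if t = 0 then 1 else 0 := by
  have hN : (N : ℝ) ≠ 0 := Nat.cast_ne_zero.2 (NeZero.ne N)
  rw [cycleGreen_val_sub_one, cycleGreen_val_add_one]
  simp only [cycleGreen]
  field_simp
  ring

theorem cycleGraph_lapMatrix_mulVec_cycleGreen (hN : 3 ≤ N) (k : Fin N) :
    (cycleGraph N).lapMatrix ℝ *ᵥ (fun i => cycleGreen N (i - k).val)
      = (fun _ => (N : ℝ)⁻¹) - Pi.single k 1 := by
  funext i
  rw [cycleGraph_lapMatrix_mulVec_apply hN, sub_right_comm i 1 k, add_sub_right_comm i 1 k,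
    cycleGreen_second_difference, Pi.sub_apply, Pi.single_apply]
  simp only [sub_eq_zero]

theorem sum_cycleDipole (j k : Fin N) : ∑ i, cycleDipole N j k i = 0 := by
  unfold cycleDipole
  rw [sum_sub_distrib, sub_eq_zero]
  exact (Equiv.sum_comp (Equiv.subRight k) (fun t => cycleGreen N t.val)).trans
    (Equiv.sum_comp (Equiv.subRight j) _).symm

theorem cycleGraph_lapMatrix_mulVec_cycleDipole (hN : 3 ≤ N) (j k : Fin N) :
    (cycleGraph N).lapMatrix ℝ *ᵥ cycleDipole N j k = Pi.single j 1 - Pi.single k 1 := by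
  unfold cycleDipole
  rw [← Pi.sub_def, mulVec_sub, cycleGraph_lapMatrix_mulVec_cycleGreen hN,
    cycleGraph_lapMatrix_mulVec_cycleGreen hN]
  abel

end Cycle

theorem sum_range_sq_two_mul_sub (n : ℕ) (c : ℝ) :
    ∑ x ∈ range n, (2 * (x : ℝ) - c) ^ 2
      = n * (2 * (n - 1) * (2 * n - 1) / 3 - 2 * c * (n - 1) + c ^ 2) := by
  induction n with
  | zero => simp
  | succ n ih =>
    rw [sum_range_succ, ih]
    push_cast
    ring

-- `(N - l + x) % N` is the value of `x - l` in `Fin N`.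
theorem sum_range_sq_cycleGreen_sub_cycleGreen {N l : ℕ} (hl : l < N) :
    ∑ x ∈ range N, (cycleGreen N x - cycleGreen N ((N - l + x) % N : ℕ)) ^ 2
      = l * (N - l) * (l * (N - l) + 2) / (12 * N) := by
  have hN : (N : ℝ) ≠ 0 := Nat.cast_ne_zero.2 (by omega)
  have hwrap : ∀ x ∈ range l, (cycleGreen N x - cycleGreen N ((N - l + x) % N : ℕ)) ^ 2
      = ((N - l) / (2 * N)) ^ 2 * (2 * (x : ℝ) - l) ^ 2 := by
    intro x hx
    rw [Nat.mod_eq_of_lt (by grind), Nat.cast_add, Nat.cast_sub hl.le, cycleGreen, cycleGreen]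
    field_simp
    ring
  have hshift : ∀ u ∈ range (N - l),
      (cycleGreen N (l + u : ℕ) - cycleGreen N ((N - l + (l + u)) % N : ℕ)) ^ 2
        = (l / (2 * N)) ^ 2 * (2 * (u : ℝ) - (N - l : ℕ)) ^ 2 := by
    intro u hu
    rw [show N - l + (l + u) = u + N by omega, Nat.add_mod_right, Nat.mod_eq_of_lt (by grind),
      Nat.cast_sub hl.le, cycleGreen, cycleGreen]
    field_simp
    push_cast
    ring
  rw [← Nat.add_sub_cancel' hl.le, sum_range_add, Nat.add_sub_cancel' hl.le, sum_congr rfl hwrap,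
    sum_congr rfl hshift, ← mul_sum, ← mul_sum, sum_range_sq_two_mul_sub, sum_range_sq_two_mul_sub,
    Nat.cast_sub hl.le]
  field_simp
  ring

theorem sum_sq_cycleDipole {N l : ℕ} {j k : Fin N} (hjk : j.val = k.val + l) :
    ∑ i, cycleDipole N j k i ^ 2 = l * (N - l) * (l * (N - l) + 2) / (12 * N) := by
  have hl : l < N := by omega
  have : NeZero N := ⟨by omega⟩
  have hjk' : (j - k).val = l := by
    rw [Fin.coe_sub_iff_le.2 (Fin.le_iff_val_le_val.2 (by omega))]
    omega
  have htranslate (t : Fin N) :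
      cycleDipole N j k (t + k) = cycleGreen N t.val - cycleGreen N ((N - l + t.val) % N : ℕ) := by
    rw [cycleDipole, add_sub_cancel_right, show t + k - j = t - (j - k) by abel, Fin.val_sub, hjk']
  rw [← Equiv.sum_comp (Equiv.addRight k), ← sum_range_sq_cycleGreen_sub_cycleGreen hl,
    ← Fin.sum_univ_eq_sum_range
      (fun x => (cycleGreen N x - cycleGreen N ((N - l + x) % N : ℕ)) ^ 2)]
  simp only [Equiv.coe_addRight, htranslate]

theorem biharmonic_cycle (N : ℕ) (hN : 3 ≤ N)
    (G : SimpleGraph (Fin N)) [DecidableRel G.Adj]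
    (hG : ∀ a b : Fin N, G.Adj a b ↔
      ((a.val + 1) % N = b.val ∨ (b.val + 1) % N = a.val))
    (L M : Matrix (Fin N) (Fin N) ℝ)
    (hL : L = G.lapMatrix ℝ)
    (hMsymm : M.IsSymm)
    (hM1 : M.mulVec (fun _ => (1 : ℝ)) = 0)
    (hLM : L * M = 1 - (N : ℝ)⁻¹ • Matrix.of (fun _ _ => (1 : ℝ))) :
    ∀ (j k : Fin N) (l : ℕ), j.val = k.val + l →
      biharmSq M j k
        = (l : ℝ) ^ 4 / (12 * N) - (l : ℝ) ^ 3 / 6 + (l : ℝ) ^ 2 * N / 12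
            - (l : ℝ) ^ 2 / (6 * N) + (l : ℝ) / 6 := by
  intro j k l hjk
  have : NeZero N := ⟨by omega⟩
  have hGc : G = cycleGraph N := by ext a b; rw [hG, cycleGraph_adj_iff_val (by omega)]
  obtain rfl : L = (cycleGraph N).lapMatrix ℝ := by subst hGc; rw [hL]; congr
  have hMw : M *ᵥ (Pi.single j 1 - Pi.single k 1) = cycleDipole N j k :=
    cycleGraph_connected_of_neZero.mulVec_eq_of_lapMatrix_mul_eq hMsymm hM1
      (by rwa [Fintype.card_fin]) (by simp) (cycleGraph_lapMatrix_mulVec_cycleDipole hN j k)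
      (sum_cycleDipole j k)
  have hN0 : (N : ℝ) ≠ 0 := by positivity
  rw [biharmSq_eq_sum_sq hMsymm, hMw, sum_sq_cycleDipole hjk]
  field_simp
  ring
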